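/- Suppose f : B_1 × (−1,0) → ℝ satisfies the spatial weak-L³ bound sup_{−1<t<0} sup_{σ>0} σ³ |{x ∈ B_1 : |f(x,t)| > σ}| ≤ m³. Then for every 0 < r < 1 and 0 < ε < 1, sup_{−r²<t<0} r^{-1} ∫_{B_r} |f(x,t)|² dx ≤ C (ε² + ε^{-1} m³) with C an absolute constant. -/

import Mathlib

open MeasureTheory Metric Set

/-!
By the layer-cake formula, `∫_{B_r} |f|² = 2 ∫₀^∞ σ |{|f| > σ} ∩ B_r| dσ`. Below the level
`R = ε / r` the measure is at most `|B_r| ≈ r³`, contributing `≈ r³ R² = r ε²`; above it the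
weak-`L³` bound `m³ σ⁻³` contributes `≈ m³ / R = r ε⁻¹ m³`. Dividing by `r` gives the claim.
-/

section WeakType

variable {α : Type*} [MeasurableSpace α] {μ : Measure α} {g : α → ℝ} {p q M R : ℝ}

theorem setLIntegral_Ioc_meas_lt_mul_rpow_le (hq : 0 < q) (hR : 0 ≤ R) :
    ∫⁻ t in Ioc 0 R, μ {a | t < g a} * ENNReal.ofReal (t ^ (q - 1))
      ≤ μ univ * ENNReal.ofReal (R ^ q / q) := by
  calc ∫⁻ t in Ioc 0 R, μ {a | t < g a} * ENNReal.ofReal (t ^ (q - 1))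
      ≤ ∫⁻ t in Ioc 0 R, μ univ * ENNReal.ofReal (t ^ (q - 1)) := by
        gcongr; exact subset_univ _
    _ = μ univ * ENNReal.ofReal (R ^ q / q) := by
        rw [lintegral_const_mul _ (by fun_prop), ← ofReal_integral_eq_lintegral_ofReal,
          ← intervalIntegral.integral_of_le hR, integral_rpow (by simp [hq]),
          sub_add_cancel, Real.zero_rpow hq.ne', sub_zero]
        · exact (intervalIntegrable_iff_integrableOn_Ioc_of_le hR).1
            (intervalIntegral.intervalIntegrable_rpow' (by linarith))
        · filter_upwards [ae_restrict_mem measurableSet_Ioc] with t ht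
          exact Real.rpow_nonneg ht.1.le _

theorem setLIntegral_Ioi_meas_lt_mul_rpow_le (hM : 0 ≤ M) (hqp : q < p) (hR : 0 < R)
    (htail : ∀ t > R, μ {a | t < g a} ≤ ENNReal.ofReal (M * t ^ (-p))) :
    ∫⁻ t in Ioi R, μ {a | t < g a} * ENNReal.ofReal (t ^ (q - 1))
      ≤ ENNReal.ofReal (M * R ^ (q - p) / (p - q)) := by
  calc ∫⁻ t in Ioi R, μ {a | t < g a} * ENNReal.ofReal (t ^ (q - 1))
      ≤ ∫⁻ t in Ioi R, ENNReal.ofReal (M * t ^ (q - 1 - p)) := by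
        refine setLIntegral_mono (by fun_prop) fun t ht => ?_
        have ht0 : 0 < t := hR.trans ht
        calc μ {a | t < g a} * ENNReal.ofReal (t ^ (q - 1))
            ≤ ENNReal.ofReal (M * t ^ (-p)) * ENNReal.ofReal (t ^ (q - 1)) := by
              gcongr; exact htail t ht
          _ ≤ ENNReal.ofReal (M * t ^ (q - 1 - p)) := by
              rw [← ENNReal.ofReal_mul' (by positivity), mul_assoc, ← Real.rpow_add ht0,
                show -p + (q - 1) = q - 1 - p by ring]
    _ = ENNReal.ofReal (M * R ^ (q - p) / (p - q)) := by
        rw [← ofReal_integral_eq_lintegral_ofReal, integral_const_mul,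
          integral_Ioi_rpow_of_lt (by linarith) hR]
        · congr 1
          rw [show q - 1 - p + 1 = q - p by ring, neg_div, ← div_neg, neg_sub, mul_div_assoc]
        · exact (integrableOn_Ioi_rpow_of_lt (by linarith) hR).const_mul _
        · filter_upwards [ae_restrict_mem measurableSet_Ioi] with t ht
          exact mul_nonneg hM (Real.rpow_nonneg (hR.trans ht).le _)

theorem lintegral_rpow_le_of_meas_lt_le (hg_nn : 0 ≤ g) (hg : AEMeasurable g μ) (hM : 0 ≤ M)
    (hq : 0 < q) (hqp : q < p) (hR : 0 < R)
    (htail : ∀ t > 0, μ {a | t < g a} ≤ ENNReal.ofReal (M * t ^ (-p))) :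
    ∫⁻ a, ENNReal.ofReal (g a ^ q) ∂μ
      ≤ ENNReal.ofReal q *
          (μ univ * ENNReal.ofReal (R ^ q / q) + ENNReal.ofReal (M * R ^ (q - p) / (p - q))) := by
  rw [lintegral_rpow_eq_lintegral_meas_lt_mul μ (.of_forall hg_nn) hg hq,
    ← Ioc_union_Ioi_eq_Ioi hR.le, lintegral_union measurableSet_Ioi (Ioc_disjoint_Ioi le_rfl)]
  gcongr
  · exact setLIntegral_Ioc_meas_lt_mul_rpow_le hq hR.le
  · exact setLIntegral_Ioi_meas_lt_mul_rpow_le hM hqp hR fun t ht => htail t (hR.trans ht)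

theorem measure_le_ofReal_mul_rpow_neg_of_pow_mul_le {s : Set α} {σ : ℝ} {n : ℕ}
    (hs : μ s ≠ ⊤) (hσ : 0 < σ) (h : σ ^ n * (μ s).toReal ≤ M) :
    μ s ≤ ENNReal.ofReal (M * σ ^ (-(n : ℝ))) := by
  rw [← ENNReal.ofReal_toReal hs, Real.rpow_neg hσ.le, Real.rpow_natCast, ← div_eq_mul_inv]
  exact ENNReal.ofReal_le_ofReal ((le_div_iff₀' (by positivity)).2 h)

theorem restrict_ball_meas_lt_le_of_weak_bound {E : Type*} [PseudoMetricSpace E]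
    [MeasurableSpace E] [OpensMeasurableSpace E] {x : E} {r : ℝ} {n : ℕ} {μ : Measure E}
    {g : E → ℝ} (hfin : μ (ball x 1) ≠ ⊤) (hr : r ≤ 1)
    (hweak : ∀ σ : ℝ, 0 < σ → σ ^ n * (μ {y ∈ ball x 1 | σ < |g y|}).toReal ≤ M) :
    ∀ σ > 0, μ.restrict (ball x r) {y | σ < |g y|} ≤ ENNReal.ofReal (M * σ ^ (-(n : ℝ))) := by
  intro σ hσ
  rw [Measure.restrict_apply' measurableSet_ball]
  calc μ ({y | σ < |g y|} ∩ ball x r)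
      ≤ μ {y ∈ ball x 1 | σ < |g y|} := measure_mono fun y hy => ⟨ball_subset_ball hr hy.2, hy.1⟩
    _ ≤ _ := measure_le_ofReal_mul_rpow_neg_of_pow_mul_le
        (measure_ne_top_of_subset (sep_subset _ _) hfin) hσ (hweak σ hσ)

end WeakType

/-- If `f` on `B₁ × (−1,0)` satisfies the uniform-in-time spatial weak-`L³` bound
`sup_t sup_{σ>0} σ³ |{x ∈ B₁ : |f(x,t)| > σ}| ≤ m³`, then for `0 < r < 1`, `0 < ε < 1`,
`sup_{−r²<t<0} r⁻¹ ∫_{B_r} |f(t)|² ≤ C (ε² + ε⁻¹ m³)`, `C` absolute. -/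
theorem stmt15 :
    ∃ C : ℝ, 0 < C ∧ ∀ (m : ℝ) (f : ℝ → EuclideanSpace ℝ (Fin 3) → ℝ), 0 ≤ m →
      (∀ t, Measurable (f t)) →
      (∀ t ∈ Ioo (-1 : ℝ) 0, ∀ σ : ℝ, 0 < σ →
        σ ^ 3 * (volume {x ∈ ball (0 : EuclideanSpace ℝ (Fin 3)) 1 | σ < |f t x|}).toReal ≤ m ^ 3) →
      ∀ r ε : ℝ, 0 < r → r < 1 → 0 < ε → ε < 1 →
        ∀ t ∈ Ioo (-r ^ 2) (0 : ℝ),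
          (ENNReal.ofReal r)⁻¹ *
              ∫⁻ x in ball (0 : EuclideanSpace ℝ (Fin 3)) r, ENNReal.ofReal (f t x ^ 2)
            ≤ ENNReal.ofReal (C * (ε ^ 2 + ε⁻¹ * m ^ 3)) := by
  set V := (volume (ball (0 : EuclideanSpace ℝ (Fin 3)) 1)).toReal
  have hV : 0 < V := ENNReal.toReal_pos (measure_ball_pos _ _ one_pos).ne' measure_ball_lt_top.ne
  refine ⟨V + 2, by linarith, ?_⟩
  intro m f hm hmeas hweak r ε hr hr1 hε hε1 t ht
  have ht1 : t ∈ Ioo (-1 : ℝ) 0 := ⟨by nlinarith [ht.1], ht.2⟩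
  have hball : volume.restrict (ball (0 : EuclideanSpace ℝ (Fin 3)) r) univ
      = ENNReal.ofReal (r ^ 3 * V) := by
    rw [Measure.restrict_apply_univ, Measure.addHaar_ball _ _ hr.le, finrank_euclideanSpace_fin,
      ENNReal.ofReal_mul (by positivity), ENNReal.ofReal_toReal measure_ball_lt_top.ne]
  have key := lintegral_rpow_le_of_meas_lt_le (fun x => abs_nonneg (f t x))
    (hmeas t).abs.aemeasurable (by positivity) two_pos (by norm_num) (div_pos hε hr)
    (restrict_ball_meas_lt_le_of_weak_bound measure_ball_lt_top.ne hr1.le (hweak t ht1))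
  simp only [Real.rpow_two, sq_abs] at key
  rw [hball, ← ENNReal.ofReal_mul (by positivity), ← ENNReal.ofReal_add (by positivity)
    (by positivity), ← ENNReal.ofReal_mul (by norm_num)] at key
  calc (ENNReal.ofReal r)⁻¹ *
        ∫⁻ x in ball (0 : EuclideanSpace ℝ (Fin 3)) r, ENNReal.ofReal (f t x ^ 2)
      ≤ ENNReal.ofReal r⁻¹ * ENNReal.ofReal (2 * (r ^ 3 * V * ((ε / r) ^ 2 / 2)
          + m ^ 3 * (ε / r) ^ ((2 : ℝ) - ((3 : ℕ) : ℝ)) / (((3 : ℕ) : ℝ) - 2))) := by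
        rw [ENNReal.ofReal_inv_of_pos hr]
        gcongr
    _ = ENNReal.ofReal (V * ε ^ 2 + 2 * ε⁻¹ * m ^ 3) := by
        rw [← ENNReal.ofReal_mul (by positivity)]
        congr 1
        norm_num [Real.rpow_neg_one]
        field_simp
    _ ≤ ENNReal.ofReal ((V + 2) * (ε ^ 2 + ε⁻¹ * m ^ 3)) := by
        gcongr
        nlinarith [sq_nonneg ε, show 0 ≤ ε⁻¹ * m ^ 3 by positivity]
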